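/- arXiv:cs/0609031 — 4 statements merged into one kernel-verified Lean document; each statement's English description precedes it below -/
import Mathlib

section
/- Let V : [r₁, r₂] → ℝ be a continuous, piecewise linear, non-decreasing function with r₁ < r₂ and V(r₁) > 0, and let C : [r₁, r₂] → ℝ be a nonnegative function with C(r) ≤ V'(r) wherever V is differentiable. Let ε = 4·(ln V(r₂) - ln V(r₁))/(r₂ - r₁). Then the set of radii r ∈ [r₁, r₂] with C(r) > ε·V(r) has Lebesgue measure at most (r₂ - r₁)/4. -/
/-!
Off a null set, a radius of `[r₁, r₂]` is interior and `V` is differentiable there (Lebesgue's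
theorem for monotone functions), so a bad radius satisfies `(log ∘ V)' = V' / V ≥ C / V > ε`,
and `ε` is four times the mean slope of `log ∘ V`. For monotone `f` the integral of `f'` over
`[a, b]` is at most `f b - f a`, so by Markov's inequality `f'` exceeds `c` times the mean slope
of `f` on a set of measure at most `(b - a) / c`.
-/

/-- `V` is piecewise linear on `[a,b]`: there is a finite subdivision
`a = p 0 < p 1 < ⋯ < p n = b` on each piece of which `V` is affine. -/
def IsPiecewiseLinearOn (V : ℝ → ℝ) (a b : ℝ) : Prop :=
  ∃ n : ℕ, ∃ p : Fin (n + 1) → ℝ, StrictMono p ∧ p 0 = a ∧ p (Fin.last n) = b ∧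
    ∀ i : Fin n, ∃ m c : ℝ, ∀ x ∈ Set.Icc (p i.castSucc) (p i.succ), V x = m * x + c

open Set MeasureTheory Real

namespace MonotoneOn

variable {f : ℝ → ℝ} {a b : ℝ}

lemma deriv_nonneg_of_mem_Ioo (hf : MonotoneOn f (Icc a b)) {x : ℝ} (hx : x ∈ Ioo a b) :
    0 ≤ deriv f x := by
  rw [← derivWithin_of_mem_nhds (Icc_mem_nhds hx.1 hx.2)]
  exact hf.derivWithin_nonneg

lemma mul_measureReal_setOf_lt_deriv_le (hab : a ≤ b) (hf : MonotoneOn f (Icc a b)) (ε : ℝ) :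
    ε * volume.real {x ∈ Ioo a b | ε < deriv f x} ≤ f b - f a := by
  set S := {x ∈ Ioo a b | ε < deriv f x}
  have hSI : S ⊆ Ioo a b := sep_subset _ _
  have hS : MeasurableSet S :=
    measurableSet_Ioo.inter (measurableSet_lt measurable_const (measurable_deriv f))
  have hf' : MonotoneOn f (uIcc a b) := by rwa [uIcc_of_le hab]
  have hSfin : volume S ≠ ⊤ := measure_ne_top_of_subset hSI measure_Ioo_lt_top.ne
  have hint : IntegrableOn (deriv f) (Ioo a b) :=
    hf'.intervalIntegrable_deriv.1.mono_set Ioo_subset_Ioc_self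
  calc ε * volume.real S = ∫ _ in S, ε := by rw [setIntegral_const, smul_eq_mul, mul_comm]
    _ ≤ ∫ x in S, deriv f x :=
        setIntegral_mono_on (integrableOn_const hSfin) (hint.mono_set hSI) hS fun x hx => hx.2.le
    _ ≤ ∫ x in Ioo a b, deriv f x :=
        setIntegral_mono_set hint ((ae_restrict_iff' measurableSet_Ioo).2
          (ae_of_all _ fun x hx => hf.deriv_nonneg_of_mem_Ioo hx)) hSI.eventuallyLE
    _ = ∫ x in a..b, deriv f x := by
        rw [intervalIntegral.integral_of_le hab, integral_Ioc_eq_integral_Ioo]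
    _ ≤ f b - f a := by
        have hfab : 0 ≤ f b - f a :=
          sub_nonneg.2 (hf (left_mem_Icc.2 hab) (right_mem_Icc.2 hab) hab)
        exact (uIcc_of_le hfab ▸ hf'.intervalIntegral_deriv_mem_uIcc).2

lemma volume_setOf_lt_deriv_le (hab : a ≤ b) (hf : MonotoneOn f (Icc a b)) {ε : ℝ}
    (hε : 0 < ε) :
    volume {x ∈ Ioo a b | ε < deriv f x} ≤ ENNReal.ofReal ((f b - f a) / ε) := by
  rw [← ofReal_measureReal (measure_ne_top_of_subset (sep_subset _ _) measure_Ioo_lt_top.ne)]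
  exact ENNReal.ofReal_le_ofReal
    ((le_div_iff₀' hε).2 (hf.mul_measureReal_setOf_lt_deriv_le hab ε))

lemma deriv_eq_zero_of_apply_eq (hf : MonotoneOn f (Icc a b)) (hfab : f a = f b) {x : ℝ}
    (hx : x ∈ Ioo a b) : deriv f x = 0 := by
  have hconst : EqOn f (fun _ => f a) (Icc a b) := fun y hy =>
    le_antisymm (hfab ▸ hf hy (right_mem_Icc.2 (hy.1.trans hy.2)) hy.2)
      (hf (left_mem_Icc.2 (hy.1.trans hy.2)) hy hy.1)
  exact ((hasDerivAt_const x (f a)).congr_of_eventuallyEq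
    (Filter.eventually_of_mem (Icc_mem_nhds hx.1 hx.2) hconst)).deriv

lemma ae_differentiableAt_of_mem_Icc (hf : MonotoneOn f (Icc a b)) :
    ∀ᵐ x, x ∈ Icc a b → x ∈ Ioo a b ∧ DifferentiableAt ℝ f x := by
  filter_upwards [hf.ae_differentiableWithinAt_of_mem, volume.ae_ne a, volume.ae_ne b]
    with x hdiff hxa hxb hx
  have hx' : x ∈ Ioo a b := ⟨hx.1.lt_of_ne' hxa, hx.2.lt_of_ne hxb⟩
  exact ⟨hx', (hdiff hx).differentiableAt (Icc_mem_nhds hx'.1 hx'.2)⟩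

lemma volume_setOf_mul_slope_lt_deriv_le (hab : a < b) (hf : MonotoneOn f (Icc a b)) {c : ℝ}
    (hc : 0 < c) :
    volume {x ∈ Ioo a b | c * slope f a b < deriv f x} ≤ ENNReal.ofReal ((b - a) / c) := by
  have hslope : 0 ≤ slope f a b :=
    (slope_nonneg_iff_of_le hab.le).2 (hf (left_mem_Icc.2 hab.le) (right_mem_Icc.2 hab.le) hab.le)
  rcases hslope.eq_or_lt with hzero | hpos
  · have hempty : {x ∈ Ioo a b | c * slope f a b < deriv f x} = ∅ :=
      eq_empty_of_forall_notMem fun x hx => hx.2.ne' <| by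
        rw [hf.deriv_eq_zero_of_apply_eq (slope_eq_zero_iff.1 hzero.symm) hx.1, ← hzero, mul_zero]
    rw [hempty, measure_empty]
    exact zero_le
  · calc _ ≤ ENNReal.ofReal ((f b - f a) / (c * slope f a b)) :=
          hf.volume_setOf_lt_deriv_le hab.le (mul_pos hc hpos)
      _ = ENNReal.ofReal ((b - a) / c) := by
          have : f b - f a ≠ 0 := sub_ne_zero.2 fun h => hpos.ne' (slope_eq_zero_iff.2 h.symm)
          rw [slope_def_field]
          field_simp [(sub_pos.2 hab).ne']

end MonotoneOn

theorem random_cut_gvy_general (r₁ r₂ : ℝ) (h : r₁ < r₂) (V C : ℝ → ℝ)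
    (hVmono : MonotoneOn V (Set.Icc r₁ r₂))
    (hVpos : 0 < V r₁)
    (hCV : ∀ r ∈ Set.Ioo r₁ r₂, DifferentiableAt ℝ V r → C r ≤ deriv V r)
    (ε : ℝ) (hε : ε = 4 * (Real.log (V r₂) - Real.log (V r₁)) / (r₂ - r₁)) :
    MeasureTheory.volume {r | r ∈ Set.Icc r₁ r₂ ∧ C r > ε * V r} ≤
      ENNReal.ofReal ((r₂ - r₁) / 4) := by
  have hV : ∀ r ∈ Icc r₁ r₂, 0 < V r := fun r hr =>
    hVpos.trans_le (hVmono (left_mem_Icc.2 h.le) hr hr.1)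
  have hlogV : MonotoneOn (fun r => log (V r)) (Icc r₁ r₂) := fun x hx y hy hxy =>
    log_le_log (hV x hx) (hVmono hx hy hxy)
  have hε_slope : ε = 4 * slope (fun r => log (V r)) r₁ r₂ := by
    rw [hε, slope_def_field, mul_div_assoc]
  have hbad : {r | r ∈ Icc r₁ r₂ ∧ C r > ε * V r} ≤ᵐ[volume]
      {r ∈ Ioo r₁ r₂ |
        4 * slope (fun r => log (V r)) r₁ r₂ < deriv (fun r => log (V r)) r} := by
    rw [← hε_slope]
    filter_upwards [hVmono.ae_differentiableAt_of_mem_Icc] with r hr ⟨hrI, hrC⟩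
    obtain ⟨hrI', hdiff⟩ := hr hrI
    refine ⟨hrI', ?_⟩
    rw [deriv.log hdiff (hV r hrI).ne', lt_div_iff₀ (hV r hrI)]
    exact hrC.trans_le (hCV r hrI' hdiff)
  exact (measure_mono_ae hbad).trans (hlogV.volume_setOf_mul_slope_lt_deriv_le h four_pos)

/-- Garg–Vazirani–Yannakakis region-growing bound. With `V(r₁) > 0` and
`ε = 4(ln V(r₂) - ln V(r₁))/(r₂-r₁)`, the set of radii with `C(r) > ε·V(r)` has
Lebesgue measure at most `(r₂-r₁)/4`. -/
theorem random_cut_gvy (r₁ r₂ : ℝ) (h : r₁ < r₂) (V C : ℝ → ℝ)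
    (hVc : ContinuousOn V (Set.Icc r₁ r₂))
    (hVpl : IsPiecewiseLinearOn V r₁ r₂)
    (hVmono : MonotoneOn V (Set.Icc r₁ r₂))
    (hVpos : 0 < V r₁)
    (hC : ∀ r ∈ Set.Icc r₁ r₂, 0 ≤ C r)
    (hCV : ∀ r ∈ Set.Ioo r₁ r₂, DifferentiableAt ℝ V r → C r ≤ deriv V r)
    (ε : ℝ) (hε : ε = 4 * (Real.log (V r₂) - Real.log (V r₁)) / (r₂ - r₁)) :
    MeasureTheory.volume {r | r ∈ Set.Icc r₁ r₂ ∧ C r > ε * V r} ≤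
      ENNReal.ofReal ((r₂ - r₁) / 4) :=
  random_cut_gvy_general r₁ r₂ h V C hVmono hVpos hCV ε hε
end

section
/- Let f : [0, ∞) → ℝ be defined by f(r) = Σ_{u,v ∈ S(r)} w_{uv} d_{uv} + Σ_{u ∈ S(r), v ∉ S(r)} w_{uv} d_{uv} · (r - dist(S,u))/(dist(S,v) - dist(S,u)) + V₀, where S(r) = B(S,r) is the ball of radius r around a fixed finite set S in a finite pseudometric space with nonnegative weights w, and V₀ ≥ 0. Then f is non-decreasing in r, and f(R) = V₀ + Σ_{u,v ∈ V} w_{uv} d_{uv} for R at least the diameter of the space. -/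
open Classical in
/-- the region-growing volume function
`f(r) = Σ_{u,v ∈ B(S,r)} w d + Σ_{u ∈ B(S,r), v ∉ B(S,r)} w d·(r - dist(S,u))/(dist(S,v) - dist(S,u)) + V₀`
is non-decreasing on `[0,∞)`, and equals `V₀` plus the total volume once `r` is at
least the diameter of the space. -/
theorem volume_function_monotone {V : Type*} [Fintype V] (d : V → V → ℝ)
    (hnonneg : ∀ u v, 0 ≤ d u v) (hrefl : ∀ u, d u u = 0)
    (hsymm : ∀ u v, d u v = d v u) (htri : ∀ u v z, d u z ≤ d u v + d v z)
    (w : V → V → ℝ) (hw : ∀ u v, 0 ≤ w u v)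
    (S : Finset V) (hS : S.Nonempty) (V₀ : ℝ) (hV₀ : 0 ≤ V₀)
    (distS : V → ℝ) (hdistS : ∀ u, distS u = S.inf' hS (fun x => d x u))
    (B : ℝ → Finset V) (hB : ∀ r, B r = Finset.univ.filter (fun u => distS u ≤ r))
    (f : ℝ → ℝ)
    (hf : ∀ r, f r = (∑ u ∈ B r, ∑ v ∈ B r, w u v * d u v)
        + (∑ u ∈ B r, ∑ v ∈ (B r)ᶜ, w u v * d u v * ((r - distS u) / (distS v - distS u)))
        + V₀) :
    MonotoneOn f (Set.Ici 0) ∧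
    ∀ R : ℝ, 0 ≤ R → (∀ u v : V, d u v ≤ R) →
      f R = V₀ + ∑ u : V, ∑ v : V, w u v * d u v := by
  classical
  -- per-pair contribution
  set T : ℝ → V → V → ℝ := fun r u v =>
    if distS u ≤ r then
      (if distS v ≤ r then w u v * d u v
       else w u v * d u v * ((r - distS u) / (distS v - distS u)))
    else 0 with hT
  have hmemB : ∀ r x, x ∈ B r ↔ distS x ≤ r := by
    intro r x; rw [hB]; simp
  have hfT : ∀ r, f r = (∑ u : V, ∑ v : V, T r u v) + V₀ := by
    intro r
    rw [hf]
    congr 1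
    rw [← Finset.sum_add_distrib]
    have hstep : ∀ u ∈ B r,
        ((∑ v ∈ B r, w u v * d u v)
          + ∑ v ∈ (B r)ᶜ, w u v * d u v * ((r - distS u) / (distS v - distS u)))
        = ∑ v : V, T r u v := by
      intro u hu
      have hu' : distS u ≤ r := (hmemB r u).mp hu
      rw [← Finset.sum_add_sum_compl (B r) (fun v => T r u v)]
      congr 1
      · exact Finset.sum_congr rfl (fun v hv => by
          simp [hT, hu', (hmemB r v).mp hv])
      · exact Finset.sum_congr rfl (fun v hv => by
          have : ¬ distS v ≤ r := fun h => (Finset.mem_compl.mp hv) ((hmemB r v).mpr h)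
          simp [hT, hu', this])
    rw [Finset.sum_congr rfl hstep]
    apply Finset.sum_subset (Finset.subset_univ _)
    intro u _ hu
    have hu' : ¬ distS u ≤ r := fun h => hu ((hmemB r u).mpr h)
    simp [hT, hu']
  have hmono : ∀ r₁ r₂ : ℝ, r₁ ≤ r₂ → ∀ u v : V, T r₁ u v ≤ T r₂ u v := by
    intro r₁ r₂ h u v
    have hwd : 0 ≤ w u v * d u v := mul_nonneg (hw u v) (hnonneg u v)
    by_cases hu1 : distS u ≤ r₁
    · have hu2 : distS u ≤ r₂ := hu1.trans h
      by_cases hv1 : distS v ≤ r₁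
      · have hv2 : distS v ≤ r₂ := hv1.trans h
        simp [hT, hu1, hu2, hv1, hv2]
      · have hden : 0 < distS v - distS u := by
          have := lt_of_not_ge hv1; linarith
        by_cases hv2 : distS v ≤ r₂
        · simp [hT, hu1, hu2, hv1, hv2]
          have h1 : (r₁ - distS u) / (distS v - distS u) ≤ 1 := by
            rw [div_le_one hden]; linarith [lt_of_not_ge hv1]
          calc w u v * d u v * ((r₁ - distS u) / (distS v - distS u))
              ≤ w u v * d u v * 1 := by
                apply mul_le_mul_of_nonneg_left h1 hwd
            _ = w u v * d u v := by ring
        · simp [hT, hu1, hu2, hv1, hv2]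
          apply mul_le_mul_of_nonneg_left _ hwd
          gcongr
    · by_cases hu2 : distS u ≤ r₂
      · by_cases hv2 : distS v ≤ r₂
        · simp [hT, hu1, hu2, hv2]; exact hwd
        · have hden : 0 < distS v - distS u := by
            have := lt_of_not_ge hv2; linarith
          simp only [hT, if_neg hu1, if_pos hu2, if_neg hv2]
          exact mul_nonneg hwd (div_nonneg (by linarith) hden.le)
      · simp [hT, hu1, hu2]
  constructor
  · intro r₁ _ r₂ _ h
    rw [hfT r₁, hfT r₂]
    have : (∑ u : V, ∑ v : V, T r₁ u v) ≤ ∑ u : V, ∑ v : V, T r₂ u v :=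
      Finset.sum_le_sum (fun u _ => Finset.sum_le_sum (fun v _ => hmono r₁ r₂ h u v))
    linarith
  · intro R hR hd
    have hBuniv : B R = Finset.univ := by
      ext u
      simp only [hmemB, Finset.mem_univ, iff_true]
      obtain ⟨s, hs⟩ := hS
      calc distS u ≤ d s u := by rw [hdistS]; exact Finset.inf'_le _ hs
        _ ≤ R := hd s u
    rw [hf, hBuniv]
    simp
    ring
end

section
/- Consider the multicut problem on a path P_n = v_n, e_n, v_{n-1}, ..., v_1, e_1, v_0 with nonnegative edge weights w and source-sink pairs. Let OPT(P) denote the minimum total weight of a set of edges whose removal separates every source-sink pair. Then OPT satisfies the recursion: OPT(e_i^+ ... e_j^+ P_{j-1}) = w_{e_j} + OPT(P_{j-1}) if v_j and v_{j-1} form a source-sink pair in the instance e_i^+ ... e_j^+ P_{j-1}; otherwise OPT(e_i^+ ... e_j^+ P_{j-1}) = min( w_{e_j} + OPT(e_j^- P_{j-1}), OPT(e_j^+ P_{j-1}) ). Consequently multicut on paths can be solved exactly by dynamic programming in O(n²) time. -/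
/-- Edge `e_j` (joining `v_j` and `v_{j-1}`) of a cut `F` separates the pair of
vertices `(a, b)` iff it lies strictly between them on the path. -/
def PathSeparates (F : Finset ℕ) (a b : ℕ) : Prop :=
  ∃ j ∈ F, min a b < j ∧ j ≤ max a b

/-- The optimal multicut value on the path `v_n, e_n, …, e_1, v_0` with edge weights `w`
and demand pairs `P`: the infimum of total weights of edge sets separating every pair. -/
noncomputable def pathMulticutOPT (n : ℕ) (w : ℕ → ℝ) (P : Finset (ℕ × ℕ)) : ℝ :=
  sInf {c : ℝ | ∃ F : Finset ℕ, F ⊆ Finset.Icc 1 n ∧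
    (∀ p ∈ P, PathSeparates F p.1 p.2) ∧ c = ∑ j ∈ F, w j}

lemma mcSet_bdd (n : ℕ) (w : ℕ → ℝ) (hw : ∀ j, 0 ≤ w j) (P : Finset (ℕ × ℕ)) :
    BddBelow {c : ℝ | ∃ F : Finset ℕ, F ⊆ Finset.Icc 1 n ∧
      (∀ p ∈ P, PathSeparates F p.1 p.2) ∧ c = ∑ j ∈ F, w j} := by
  refine ⟨0, fun c hc => ?_⟩
  obtain ⟨F, -, -, rfl⟩ := hc
  exact Finset.sum_nonneg fun j _ => hw j

lemma mcSet_ne (n : ℕ) (w : ℕ → ℝ) (P : Finset (ℕ × ℕ))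
    (h : ∀ p ∈ P, p.1 ≤ n ∧ p.2 ≤ n ∧ p.1 ≠ p.2) :
    {c : ℝ | ∃ F : Finset ℕ, F ⊆ Finset.Icc 1 n ∧
      (∀ p ∈ P, PathSeparates F p.1 p.2) ∧ c = ∑ j ∈ F, w j}.Nonempty := by
  refine ⟨∑ j ∈ Finset.Icc 1 n, w j, Finset.Icc 1 n, subset_rfl, fun p hp => ?_, rfl⟩
  obtain ⟨h1, h2, h3⟩ := h p hp
  exact ⟨max p.1 p.2, Finset.mem_Icc.2 (by omega), by omega, le_rfl⟩

/-- the dynamic-programming recursion for multicut on a path. For an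
instance with leftmost vertex `v_{n+1}`: if `v_{n+1}, v_n` form a demand pair, the
optimum is `w_{n+1}` plus the optimum of the instance with `e_{n+1}` deleted together
with all pairs involving `v_{n+1}` (the `e⁻` operation); otherwise the optimum is the
minimum of that quantity and the optimum of the instance with `e_{n+1}` contracted,
i.e. every occurrence of `v_{n+1}` in a pair replaced by `v_n` (the `e⁺` operation). -/
theorem pathMulticut_recursion (n : ℕ) (w : ℕ → ℝ) (hw : ∀ j, 0 ≤ w j)
    (P : Finset (ℕ × ℕ)) (hP : ∀ p ∈ P, p.1 ≤ n + 1 ∧ p.2 ≤ n + 1 ∧ p.1 ≠ p.2) :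
    (((n + 1, n) ∈ P ∨ (n, n + 1) ∈ P) →
      pathMulticutOPT (n + 1) w P =
        w (n + 1) + pathMulticutOPT n w
          (P.filter (fun p => p.1 ≠ n + 1 ∧ p.2 ≠ n + 1))) ∧
    (((n + 1, n) ∉ P ∧ (n, n + 1) ∉ P) →
      pathMulticutOPT (n + 1) w P =
        min (w (n + 1) + pathMulticutOPT n w
            (P.filter (fun p => p.1 ≠ n + 1 ∧ p.2 ≠ n + 1)))
          (pathMulticutOPT n w
            (P.image (fun p =>
              (if p.1 = n + 1 then n else p.1, if p.2 = n + 1 then n else p.2))))) := by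
  classical
  set Pm := P.filter (fun p => p.1 ≠ n + 1 ∧ p.2 ≠ n + 1) with hPm
  set Pc := P.image (fun p =>
      (if p.1 = n + 1 then n else p.1, if p.2 = n + 1 then n else p.2)) with hPc
  set A := {c : ℝ | ∃ F : Finset ℕ, F ⊆ Finset.Icc 1 (n + 1) ∧
      (∀ p ∈ P, PathSeparates F p.1 p.2) ∧ c = ∑ j ∈ F, w j} with hA
  set B := {c : ℝ | ∃ F : Finset ℕ, F ⊆ Finset.Icc 1 n ∧
      (∀ p ∈ Pm, PathSeparates F p.1 p.2) ∧ c = ∑ j ∈ F, w j} with hB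
  set C := {c : ℝ | ∃ F : Finset ℕ, F ⊆ Finset.Icc 1 n ∧
      (∀ p ∈ Pc, PathSeparates F p.1 p.2) ∧ c = ∑ j ∈ F, w j} with hC
  have hPmB : ∀ p ∈ Pm, p.1 ≤ n ∧ p.2 ≤ n ∧ p.1 ≠ p.2 := by
    intro p hp
    rw [hPm, Finset.mem_filter] at hp
    obtain ⟨hp1, hp2, hp3⟩ := hp
    obtain ⟨h1, h2, h3⟩ := hP p hp1
    omega
  have hAbdd : BddBelow A := mcSet_bdd (n + 1) w hw P
  have hBbdd : BddBelow B := mcSet_bdd n w hw Pm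
  have hCbdd : BddBelow C := mcSet_bdd n w hw Pc
  have hAne : A.Nonempty := mcSet_ne (n + 1) w P hP
  have hBne : B.Nonempty := mcSet_ne n w Pm hPmB
  have hOPTA : pathMulticutOPT (n + 1) w P = sInf A := rfl
  have hOPTB : pathMulticutOPT n w Pm = sInf B := rfl
  have hOPTC : pathMulticutOPT n w Pc = sInf C := rfl
  -- insert construction: from a cut for Pm on [1,n] produce a cut for P on [1,n+1]
  have hins : ∀ F' : Finset ℕ, F' ⊆ Finset.Icc 1 n →
      (∀ p ∈ Pm, PathSeparates F' p.1 p.2) →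
      (w (n + 1) + ∑ j ∈ F', w j) ∈ A := by
    intro F' hsub hsep
    have hnot : (n + 1) ∉ F' := fun h => by
      have := Finset.mem_Icc.1 (hsub h); omega
    refine ⟨insert (n + 1) F', ?_, ?_, ?_⟩
    · intro x hx
      rcases Finset.mem_insert.1 hx with rfl | hx
      · exact Finset.mem_Icc.2 (by omega)
      · have := Finset.mem_Icc.1 (hsub hx); exact Finset.mem_Icc.2 (by omega)
    · intro p hp
      obtain ⟨h1, h2, h3⟩ := hP p hp
      by_cases hcase : p.1 = n + 1 ∨ p.2 = n + 1
      · exact ⟨n + 1, Finset.mem_insert_self _ _, by omega, by omega⟩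
      · push_neg at hcase
        have hpPm : p ∈ Pm := by
          rw [hPm, Finset.mem_filter]; exact ⟨hp, hcase.1, hcase.2⟩
        obtain ⟨j, hj, hj1, hj2⟩ := hsep p hpPm
        exact ⟨j, Finset.mem_insert_of_mem hj, hj1, hj2⟩
    · rw [Finset.sum_insert hnot]
  -- erase construction: from a cut for P containing n+1 produce a cut for Pm
  have hers : ∀ F : Finset ℕ, F ⊆ Finset.Icc 1 (n + 1) → (n + 1) ∈ F →
      (∀ p ∈ P, PathSeparates F p.1 p.2) →
      (∑ j ∈ F.erase (n + 1), w j) ∈ B ∧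
        ∑ j ∈ F, w j = w (n + 1) + ∑ j ∈ F.erase (n + 1), w j := by
    intro F hsub hmem hsep
    constructor
    · refine ⟨F.erase (n + 1), ?_, ?_, rfl⟩
      · intro x hx
        have h1 := Finset.mem_erase.1 hx
        have := Finset.mem_Icc.1 (hsub h1.2)
        exact Finset.mem_Icc.2 (by omega)
      · intro p hp
        have hpb := hPmB p hp
        have hpP : p ∈ P := (Finset.mem_filter.1 hp).1
        obtain ⟨j, hj, hj1, hj2⟩ := hsep p hpP
        refine ⟨j, Finset.mem_erase.2 ⟨by omega, hj⟩, hj1, hj2⟩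
    · rw [← Finset.sum_erase_add F w hmem]; ring
  constructor
  · -- case: (n+1, n) is a demand pair
    intro hpair
    rw [hOPTA, hOPTB]
    apply le_antisymm
    · rw [← sub_le_iff_le_add']
      refine le_csInf hBne fun c hc => ?_
      obtain ⟨F', hsub, hsep, rfl⟩ := hc
      rw [sub_le_iff_le_add']
      exact csInf_le hAbdd (hins F' hsub hsep)
    · refine le_csInf hAne fun c hc => ?_
      obtain ⟨F, hsub, hsep, rfl⟩ := hc
      have hmem : (n + 1) ∈ F := by
        rcases hpair with hpair | hpair
        · obtain ⟨j, hj, hj1, hj2⟩ := hsep _ hpair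
          simp only at hj1 hj2
          have : j = n + 1 := by omega
          exact this ▸ hj
        · obtain ⟨j, hj, hj1, hj2⟩ := hsep _ hpair
          simp only at hj1 hj2
          have : j = n + 1 := by omega
          exact this ▸ hj
      obtain ⟨hB1, hB2⟩ := hers F hsub hmem hsep
      have := csInf_le hBbdd hB1
      linarith
  · -- case: (n+1, n) is not a demand pair
    intro hpair
    have hPcB : ∀ p ∈ Pc, p.1 ≤ n ∧ p.2 ≤ n ∧ p.1 ≠ p.2 := by
      intro q hq
      rw [hPc, Finset.mem_image] at hq
      obtain ⟨⟨a, b⟩, hp, rfl⟩ := hq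
      obtain ⟨h1, h2, h3⟩ := hP _ hp
      simp only at h1 h2 h3 ⊢
      have hne1 : ¬(a = n + 1 ∧ b = n) := by rintro ⟨rfl, rfl⟩; exact hpair.1 hp
      have hne2 : ¬(a = n ∧ b = n + 1) := by rintro ⟨rfl, rfl⟩; exact hpair.2 hp
      refine ⟨?_, ?_, ?_⟩ <;>
        by_cases c1 : a = n + 1 <;> by_cases c2 : b = n + 1 <;>
        simp [c1, c2] <;> omega
    have hCne : C.Nonempty := mcSet_ne n w Pc hPcB
    rw [hOPTA, hOPTB, hOPTC]
    apply le_antisymm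
    · refine le_min ?_ ?_
      · rw [← sub_le_iff_le_add']
        refine le_csInf hBne fun c hc => ?_
        obtain ⟨F', hsub, hsep, rfl⟩ := hc
        rw [sub_le_iff_le_add']
        exact csInf_le hAbdd (hins F' hsub hsep)
      · refine le_csInf hCne fun c hc => ?_
        obtain ⟨F', hsub, hsep, rfl⟩ := hc
        refine csInf_le hAbdd ⟨F', fun x hx => ?_, fun p hp => ?_, rfl⟩
        · have := Finset.mem_Icc.1 (hsub hx); exact Finset.mem_Icc.2 (by omega)
        · obtain ⟨h1, h2, h3⟩ := hP p hp
          have hq : (if p.1 = n + 1 then n else p.1, if p.2 = n + 1 then n else p.2) ∈ Pc := by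
            rw [hPc]; exact Finset.mem_image_of_mem _ hp
          obtain ⟨j, hj, hj1, hj2⟩ := hsep _ hq
          simp only at hj1 hj2
          refine ⟨j, hj, ?_, ?_⟩ <;>
            by_cases c1 : p.1 = n + 1 <;> by_cases c2 : p.2 = n + 1 <;>
            simp only [c1, c2, if_true, if_false] at hj1 hj2 <;> omega
    · refine le_csInf hAne fun c hc => ?_
      obtain ⟨F, hsub, hsep, rfl⟩ := hc
      by_cases hmem : (n + 1) ∈ F
      · obtain ⟨hB1, hB2⟩ := hers F hsub hmem hsep
        have := csInf_le hBbdd hB1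
        have h2 := min_le_left (w (n + 1) + sInf B) (sInf C)
        linarith
      · have hFsub : F ⊆ Finset.Icc 1 n := by
          intro x hx
          have := Finset.mem_Icc.1 (hsub hx)
          have : x ≠ n + 1 := fun h => hmem (h ▸ hx)
          exact Finset.mem_Icc.2 (by omega)
        have hCmem : (∑ j ∈ F, w j) ∈ C := by
          refine ⟨F, hFsub, fun q hq => ?_, rfl⟩
          rw [hPc, Finset.mem_image] at hq
          obtain ⟨p, hp, rfl⟩ := hq
          obtain ⟨h1, h2, h3⟩ := hP p hp
          obtain ⟨j, hj, hj1, hj2⟩ := hsep p hp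
          have hjn : j ≤ n := (Finset.mem_Icc.1 (hFsub hj)).2
          refine ⟨j, hj, ?_, ?_⟩ <;>
            by_cases c1 : p.1 = n + 1 <;> by_cases c2 : p.2 = n + 1 <;>
            simp only [c1, c2, if_true, if_false] <;> omega
        exact le_trans (min_le_right _ _) (csInf_le hCbdd hCmem)
end

section
/- The Bipartite Multi-cut problem is NP-hard: there is a polynomial-time, cost-preserving reduction from Min UnCut to BMC. Specifically, given Min UnCut constraints on variables x_1,...,x_n, construct a graph on vertices {v_1,...,v_n, v_{-1},...,v_{-n}} where each constraint x_i ⊕ x_j = 0 contributes unit-weight edges {v_i, v_j} and {v_{-i}, v_{-j}}, and each constraint x_i ⊕ x_j = 1 contributes edges {v_i, v_{-j}} and {v_{-i}, v_j}, with source-sink pairs (v_i, v_{-i}) for each i. Then assignments violating exactly m constraints correspond bijectively to feasible BMC partitions cutting exactly 2m edges, so the optimum of the BMC instance is exactly twice the Min UnCut optimum. -/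
/-- A Min UnCut constraint `(i, j, b)` demands `x_i ⊕ x_j = b`. The number of
constraints violated by an assignment `x`. -/
def minUncutViolations {n : ℕ} (L : List (Fin n × Fin n × Bool)) (x : Fin n → Bool) : ℕ :=
  (L.filter (fun c => xor (x c.1) (x c.2.1) ≠ c.2.2)).length

/-- The BMC instance built from the constraints: vertex `(i, false)` is `v_i` and
`(i, true)` is `v_{-i}`; each constraint `(i, j, b)` contributes the unit-weight edges
`{v_i, (j, b)}` and `{v_{-i}, (j, ¬b)}`. This counts the edges cut by the partition
given by the membership predicate `X`. -/
def bmcCutEdges {n : ℕ} (L : List (Fin n × Fin n × Bool))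
    (X : Fin n × Bool → Bool) : ℕ :=
  (L.map (fun c =>
      (if X (c.1, false) ≠ X (c.2.1, c.2.2) then 1 else 0) +
      (if X (c.1, true) ≠ X (c.2.1, !c.2.2) then 1 else 0))).sum

lemma bmc_term (a c b : Bool) :
    (if a ≠ xor c b then (1:ℕ) else 0) + (if (!a) ≠ xor c (!b) then 1 else 0) =
      2 * (if xor a c ≠ b then 1 else 0) := by revert a c b; decide

lemma bmc_key {n : ℕ} (L : List (Fin n × Fin n × Bool)) (X : Fin n × Bool → Bool)
    (h : ∀ i : Fin n, X (i, false) ≠ X (i, true)) :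
    bmcCutEdges L X = 2 * minUncutViolations L (fun i => X (i, false)) := by
  have hnot : ∀ i : Fin n, X (i, true) = !X (i, false) := by
    intro i; have := h i
    cases hx : X (i, false) <;> cases hy : X (i, true) <;> simp_all
  have hval : ∀ (j : Fin n) (b : Bool), X (j, b) = xor (X (j, false)) b := by
    intro j b; cases b <;> simp [hnot]
  induction L with
  | nil => rfl
  | cons c L ih =>
    obtain ⟨i, j, b⟩ := c
    simp only [bmcCutEdges, minUncutViolations, List.map_cons, List.sum_cons,
      List.filter_cons] at *
    rw [hval j b, hval j (!b), hnot i, bmc_term, ih]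
    by_cases hc : xor (X (i, false)) (X (j, false)) ≠ b <;> simp [hc] <;> omega

/-- the cost-preserving reduction from Min UnCut to Bipartite Multi-cut.
Every assignment `x` yields a feasible BMC partition (separating all pairs
`(v_i, v_{-i})`) cutting exactly twice as many edges as violated constraints; every
feasible partition arises from the assignment `i ↦ X(v_i)` with the same
correspondence; consequently the BMC optimum equals twice the Min UnCut optimum. -/
theorem minUncut_to_BMC_reduction (n : ℕ) (L : List (Fin n × Fin n × Bool)) :
    (∀ x : Fin n → Bool,
      (∀ i : Fin n, (fun p : Fin n × Bool => xor (x p.1) p.2) (i, false) ≠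
        (fun p : Fin n × Bool => xor (x p.1) p.2) (i, true)) ∧
      bmcCutEdges L (fun p => xor (x p.1) p.2) = 2 * minUncutViolations L x) ∧
    (∀ X : Fin n × Bool → Bool, (∀ i : Fin n, X (i, false) ≠ X (i, true)) →
      bmcCutEdges L X = 2 * minUncutViolations L (fun i => X (i, false))) ∧
    sInf {m : ℕ | ∃ X : Fin n × Bool → Bool,
        (∀ i : Fin n, X (i, false) ≠ X (i, true)) ∧ m = bmcCutEdges L X} =
      2 * sInf {m : ℕ | ∃ x : Fin n → Bool, m = minUncutViolations L x} := by
  have feas : ∀ x : Fin n → Bool, ∀ i : Fin n,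
      (fun p : Fin n × Bool => xor (x p.1) p.2) (i, false) ≠
        (fun p : Fin n × Bool => xor (x p.1) p.2) (i, true) := by
    intro x i; simp
  have part1 : ∀ x : Fin n → Bool,
      bmcCutEdges L (fun p => xor (x p.1) p.2) = 2 * minUncutViolations L x := by
    intro x
    have := bmc_key L (fun p => xor (x p.1) p.2) (feas x)
    simpa using this
  refine ⟨fun x => ⟨feas x, part1 x⟩, fun X hX => bmc_key L X hX, ?_⟩
  have hTne : Set.Nonempty {m : ℕ | ∃ x : Fin n → Bool, m = minUncutViolations L x} :=
    ⟨_, fun _ => false, rfl⟩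
  obtain ⟨x1, hx1⟩ :
      ∃ x, sInf {m : ℕ | ∃ x : Fin n → Bool, m = minUncutViolations L x} =
        minUncutViolations L x := Nat.sInf_mem hTne
  apply le_antisymm
  · apply Nat.sInf_le
    exact ⟨fun p => xor (x1 p.1) p.2, feas x1, by rw [part1 x1, hx1]⟩
  · obtain ⟨X, hXf, hXe⟩ := Nat.sInf_mem
      (⟨_, fun p => xor (false : Bool) p.2, feas (fun _ => false), rfl⟩ :
        Set.Nonempty {m : ℕ | ∃ X : Fin n × Bool → Bool,
          (∀ i : Fin n, X (i, false) ≠ X (i, true)) ∧ m = bmcCutEdges L X})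
    rw [hXe, bmc_key L X hXf]
    have h2 : sInf {m : ℕ | ∃ x : Fin n → Bool, m = minUncutViolations L x} ≤
        minUncutViolations L (fun i => X (i, false)) :=
      Nat.sInf_le ⟨fun i => X (i, false), rfl⟩
    exact Nat.mul_le_mul_left 2 h2
end
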